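/- arXiv:1704.03933 — 4 statements merged into one kernel-verified Lean document; each statement's English description precedes it below -/
import Mathlib

section
/- Let M be a module over a ring, decomposed as a finite direct sum M = ⊕ᵢ Mᵢ with each Mᵢ indecomposable (with local endomorphism ring). For each i, let {λ_{i,j}}_j be a finite family of morphisms Mᵢ → M. If the morphism ⊕ᵢ Mᵢ → M whose i-th component is ∑_j λ_{i,j} is an isomorphism, then for each i there exists an index jᵢ such that the morphism ⊕ᵢ Mᵢ → M whose i-th component is λ_{i,jᵢ} is an isomorphism. -/
open Function

section aux

lemma addUnit {A : Type*} [Ring A] [IsLocalRing A] {a b : A} (h : IsUnit (a + b)) :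
    IsUnit a ∨ IsUnit b := by
  rcases h with ⟨u, hu⟩
  have h1 : (↑u⁻¹ : A) * a + ↑u⁻¹ * b = 1 := by
    rw [← mul_add, ← hu, Units.inv_mul]
  rcases IsLocalRing.isUnit_or_isUnit_of_add_one h1 with h | h
  · left
    have := u.isUnit.mul h
    rwa [Units.mul_inv_cancel_left] at this
  · right
    have := u.isUnit.mul h
    rwa [Units.mul_inv_cancel_left] at this

lemma sumUnit {A : Type*} [Ring A] [IsLocalRing A] {J : Type*} (s : Finset J)
    (f : J → A) (h : IsUnit (∑ j ∈ s, f j)) : ∃ j ∈ s, IsUnit (f j) := by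
  classical
  by_contra hc
  push_neg at hc
  exact (Finset.sum_induction f (fun x => ¬ IsUnit x)
    (fun a b ha hb hab => (addUnit hab).elim ha hb)
    not_isUnit_zero hc) h

variable {R : Type*} [Ring R] {ι : Type*} [Fintype ι] [DecidableEq ι]
    {M : ι → Type*} [∀ i, AddCommGroup (M i)] [∀ i, Module R (M i)]

private def Fmap (c : ∀ i, M i →ₗ[R] ∀ i, M i) : (∀ i, M i) →ₗ[R] ∀ i, M i :=
  ∑ i, (c i) ∘ₗ (LinearMap.proj i)

lemma Fmap_single (c : ∀ i, M i →ₗ[R] ∀ i, M i) (i : ι) (x : M i) :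
    Fmap c (Pi.single i x) = c i x := by
  simp only [Fmap, LinearMap.sum_apply, LinearMap.comp_apply, LinearMap.proj_apply]
  rw [Finset.sum_eq_single i]
  · simp
  · intro b _ hb
    rw [Pi.single_eq_of_ne hb, map_zero]
  · simp

lemma keyA (c : ∀ i, M i →ₗ[R] ∀ i, M i) (hF : Function.Bijective (Fmap c))
    (i₀ : ι) (hloc : IsLocalRing (Module.End R (M i₀)))
    {κ₀ : Type*} [Fintype κ₀] (lam0 : κ₀ → (M i₀ →ₗ[R] ∀ i, M i))
    (hc : c i₀ = ∑ j, lam0 j) :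
    ∃ j₀, Function.Bijective (Fmap (Function.update c i₀ (lam0 j₀))) := by
  set e := LinearEquiv.ofBijective (Fmap c) hF with he
  have heF : ∀ x, e x = Fmap c x := fun x => rfl
  set p : (∀ i, M i) →ₗ[R] M i₀ := LinearMap.proj i₀ with hp
  set u : κ₀ → Module.End R (M i₀) :=
    fun j => p ∘ₗ (e.symm.toLinearMap ∘ₗ lam0 j) with hu
  have hes : ∀ x : M i₀, e.symm (c i₀ x) = Pi.single i₀ x := by
    intro x
    rw [← Fmap_single c i₀ x, ← heF, e.symm_apply_apply]
  have hsum : ∑ j, u j = (1 : Module.End R (M i₀)) := by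
    ext x
    simp only [LinearMap.sum_apply, hu, LinearMap.comp_apply, Module.End.one_apply,
      LinearEquiv.coe_coe]
    rw [← map_sum, ← map_sum, ← LinearMap.sum_apply, ← hc, hes]
    simp [hp]
  obtain ⟨j₀, -, hunit⟩ := sumUnit Finset.univ u (by rw [hsum]; exact isUnit_one)
  refine ⟨j₀, ?_⟩
  -- the inverse unit
  set v : Module.End R (M i₀) := ↑hunit.unit⁻¹ with hv
  have hvu : v * u j₀ = 1 := hunit.unit.inv_mul
  have huv : u j₀ * v = 1 := hunit.unit.mul_inv
  set d : M i₀ →ₗ[R] ∀ i, M i :=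
    e.symm.toLinearMap ∘ₗ lam0 j₀ - LinearMap.single R M i₀ with hd
  -- pointwise facts
  have hpd : ∀ x : M i₀, p (d x) = u j₀ x - x := by
    intro x
    simp [hd, hu, hp]
  -- Fmap of the updated family, composed with e.symm, equals H := id + d ∘ p
  have hG : ∀ x, e.symm (Fmap (Function.update c i₀ (lam0 j₀)) x) = x + d (p x) := by
    intro x
    have hsplit : Fmap (Function.update c i₀ (lam0 j₀)) x
        = Fmap c x + (lam0 j₀ (p x) - c i₀ (p x)) := by
      simp only [Fmap, LinearMap.sum_apply, LinearMap.comp_apply, LinearMap.proj_apply]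
      rw [← Finset.sum_erase_add _ _ (Finset.mem_univ i₀),
          ← Finset.sum_erase_add Finset.univ (fun i => c i (x i)) (Finset.mem_univ i₀)]
      have : ∀ i ∈ Finset.univ.erase i₀,
          (Function.update c i₀ (lam0 j₀)) i (x i) = c i (x i) := by
        intro i hi
        rw [Function.update_of_ne (Finset.mem_erase.1 hi).1]
      rw [Finset.sum_congr rfl this, Function.update_self]
      simp only [hp, LinearMap.proj_apply]
      abel
    rw [hsplit, map_add, map_sub, ← heF x, e.symm_apply_apply, hes, hd]
    simp only [LinearMap.sub_apply, LinearMap.comp_apply, LinearEquiv.coe_coe,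
      LinearMap.single_apply]
  -- H is bijective with explicit inverse K x = x - d (v (p x))
  have hH : Function.Bijective (fun x : ∀ i, M i => x + d (p x)) := by
    refine Function.bijective_iff_has_inverse.2 ⟨fun x => x - d (v (p x)), ?_, ?_⟩
    · intro x
      show (x + d (p x)) - d (v (p (x + d (p x)))) = x
      have h1 : p (x + d (p x)) = u j₀ (p x) := by
        rw [map_add, hpd]; abel
      simp only [h1]
      have h2 : v (u j₀ (p x)) = p x := by
        have := congrArg (fun f : Module.End R (M i₀) => f (p x)) hvu
        simpa [Module.End.mul_apply] using this
      rw [h2]; abel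
    · intro x
      show (x - d (v (p x))) + d (p (x - d (v (p x)))) = x
      have h1 : p (x - d (v (p x))) = p x - (u j₀ (v (p x)) - v (p x)) := by
        rw [map_sub, hpd]
      have h2 : u j₀ (v (p x)) = p x := by
        have := congrArg (fun f : Module.End R (M i₀) => f (p x)) huv
        simpa [Module.End.mul_apply] using this
      rw [h1, h2]
      simp only [sub_sub_cancel]
      abel
  -- conclude
  have : (fun x => Fmap (Function.update c i₀ (lam0 j₀)) x)
      = (fun x => e (x + d (p x))) := by
    funext x
    rw [← hG x, e.apply_symm_apply]
  have hbij : Function.Bijective (fun x => e (x + d (p x))) :=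
    e.bijective.comp hH
  rw [show (Fmap (Function.update c i₀ (lam0 j₀)) : (∀ i, M i) → ∀ i, M i)
      = fun x => Fmap (Function.update c i₀ (lam0 j₀)) x from rfl, this]
  exact hbij

end aux



/-- Let `M = ⊕ᵢ Mᵢ` be a finite direct sum of indecomposable modules
(each with local endomorphism ring).  For each `i` let `{λ_{i,j}}_j` be a finite family
of morphisms `Mᵢ → M`.  If the morphism `⊕ᵢ Mᵢ → M` whose `i`-th component is
`∑ j, λ_{i,j}` is an isomorphism, then for each `i` one may choose an index `jᵢ` so that
the morphism with `i`-th component `λ_{i,jᵢ}` is an isomorphism. -/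
theorem stmt0 {R : Type*} [Ring R] {ι : Type*} [Fintype ι] [DecidableEq ι]
    (M : ι → Type*) [∀ i, AddCommGroup (M i)] [∀ i, Module R (M i)]
    (hloc : ∀ i, IsLocalRing (Module.End R (M i)))
    (κ : ι → Type*) [∀ i, Fintype (κ i)]
    (lam : ∀ i, κ i → (M i →ₗ[R] (∀ i, M i)))
    (h : Function.Bijective
      (∑ i, (∑ j, lam i j) ∘ₗ (LinearMap.proj i : (∀ i, M i) →ₗ[R] M i))) :
    ∃ j : ∀ i, κ i, Function.Bijective
      (∑ i, (lam i (j i)) ∘ₗ (LinearMap.proj i : (∀ i, M i) →ₗ[R] M i)) := by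
  classical
  set c₀ : ∀ i, M i →ₗ[R] ∀ i, M i := fun i => ∑ j, lam i j with hc₀
  have hF0 : Function.Bijective (Fmap c₀) := by
    have : ⇑(Fmap c₀) = ∑ i, ⇑((∑ j, lam i j) ∘ₗ (LinearMap.proj i : (∀ i, M i) →ₗ[R] M i)) :=
      LinearMap.coe_sum _ _
    rw [this]; exact h
  have main : ∀ s : Finset ι, ∃ j : ∀ i, κ i, Function.Bijective
      (Fmap (fun i => if i ∈ s then lam i (j i) else c₀ i)) := by
    intro s
    induction s using Finset.induction_on with
    | empty =>
      have hne : ∀ i, Nonempty (κ i) := fun i => by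
        obtain ⟨j₀, -⟩ := keyA c₀ hF0 i (hloc i) (lam i) rfl
        exact ⟨j₀⟩
      refine ⟨fun i => (hne i).some, ?_⟩
      have : (fun i => if i ∈ (∅ : Finset ι) then lam i ((hne i).some) else c₀ i) = c₀ := by
        funext i; simp
      rw [this]; exact hF0
    | @insert a s' hnot ih =>
      obtain ⟨j, hj⟩ := ih
      set cs : ∀ i, M i →ₗ[R] ∀ i, M i :=
        fun i => if i ∈ s' then lam i (j i) else c₀ i with hcs
      obtain ⟨ja, hja⟩ := keyA cs hj a (hloc a) (lam a) (by simp [hcs, hnot, hc₀])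
      refine ⟨Function.update j a ja, ?_⟩
      have heq : (fun i => if i ∈ insert a s' then lam i (Function.update j a ja i) else c₀ i)
          = Function.update cs a (lam a ja) := by
        funext i
        by_cases hia : i = a
        · subst hia
          simp
        · rw [Function.update_of_ne hia, Function.update_of_ne hia, hcs]
          simp [Finset.mem_insert, hia]
      rw [heq]
      exact hja
  obtain ⟨j, hj⟩ := main Finset.univ
  refine ⟨j, ?_⟩
  have : (fun i => if i ∈ (Finset.univ : Finset ι) then lam i (j i) else c₀ i)
      = fun i => lam i (j i) := by
    funext i; simp
  rw [this] at hj
  have h2 : (∑ i, ⇑((lam i (j i)) ∘ₗ (LinearMap.proj i : (∀ i, M i) →ₗ[R] M i)))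
      = ⇑(Fmap fun i => lam i (j i)) := (LinearMap.coe_sum _ _).symm
  rw [h2]
  exact hj
end

section
/- Let M = M₁ ⊕ M₂ with M₁ indecomposable (local endomorphism ring), and let u, v : M₁ → M and w : M₂ → M be morphisms. If the morphism [u+v, w]ᵀ : M₁ ⊕ M₂ → M is an isomorphism, then at least one of the morphisms [u, w]ᵀ or [v, w]ᵀ : M₁ ⊕ M₂ → M is an isomorphism. -/
private lemma stmt1_aux {R : Type*} [Ring R] {M M₁ M₂ : Type*} [AddCommGroup M] [Module R M]
    [AddCommGroup M₁] [Module R M₁] [AddCommGroup M₂] [Module R M₂]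
    (u : M₁ →ₗ[R] M) (w : M₂ →ₗ[R] M) (e : M ≃ₗ[R] M₁ × M₂)
    (hw : ∀ y : M₂, e (w y) = (0, y))
    (ha : IsUnit ((LinearMap.fst R M₁ M₂).comp ((e : M →ₗ[R] M₁ × M₂).comp u))) :
    Function.Bijective (LinearMap.coprod u w) := by
  obtain ⟨α, hα⟩ := ha
  set a : Module.End R M₁ := (LinearMap.fst R M₁ M₂).comp ((e : M →ₗ[R] M₁ × M₂).comp u)
    with ha_def
  set c : M₁ →ₗ[R] M₂ := (LinearMap.snd R M₁ M₂).comp ((e : M →ₗ[R] M₁ × M₂).comp u)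
    with hc_def
  have heu : ∀ x : M₁, e (u x) = (a x, c x) := fun x => rfl
  set a' : Module.End R M₁ := (↑α⁻¹ : Module.End R M₁) with ha'_def
  have h1 : ∀ x, a' (a x) = x := by
    intro x
    have : (a' * a) x = (1 : Module.End R M₁) x := by
      rw [ha'_def, ← hα, Units.inv_mul]
    simpa [Module.End.mul_apply] using this
  have h2 : ∀ x, a (a' x) = x := by
    intro x
    have : (a * a') x = (1 : Module.End R M₁) x := by
      rw [ha'_def, ← hα, Units.mul_inv]
    simpa [Module.End.mul_apply] using this
  refine Function.bijective_iff_has_inverse.mpr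
    ⟨fun m => (a' (e m).1, (e m).2 - c (a' (e m).1)), ?_, ?_⟩
  · rintro ⟨x, y⟩
    have he : e (LinearMap.coprod u w (x, y)) = (a x, c x + y) := by
      simp only [LinearMap.coprod_apply, map_add, heu, hw]
      simp [Prod.ext_iff]
    dsimp only
    rw [he]
    simp [h1]
  · intro m
    apply e.injective
    have : e (LinearMap.coprod u w (a' (e m).1, (e m).2 - c (a' (e m).1)))
        = ((e m).1, (e m).2) := by
      simp only [LinearMap.coprod_apply, map_add, heu, hw, h2]
      simp [Prod.ext_iff]
    simpa using this

/-- Let `M = M₁ ⊕ M₂` with `M₁` indecomposable (local endomorphism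
ring) and `u, v : M₁ → M`, `w : M₂ → M` morphisms of finite-length modules.  If
`[u+v, w]ᵀ : M₁ ⊕ M₂ → M` is an isomorphism, then `[u, w]ᵀ` or `[v, w]ᵀ` is an
isomorphism. -/
theorem stmt1 {R : Type*} [Ring R]
    (M M₁ M₂ : Type*) [AddCommGroup M] [Module R M]
    [AddCommGroup M₁] [Module R M₁] [AddCommGroup M₂] [Module R M₂]
    (hfinM : IsFiniteLength R M) (hfin1 : IsFiniteLength R M₁)
    (hfin2 : IsFiniteLength R M₂)
    (hloc : IsLocalRing (Module.End R M₁))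
    (u v : M₁ →ₗ[R] M) (w : M₂ →ₗ[R] M)
    (h : Function.Bijective (LinearMap.coprod (u + v) w)) :
    Function.Bijective (LinearMap.coprod u w) ∨
      Function.Bijective (LinearMap.coprod v w) := by
  set f := LinearMap.coprod (u + v) w with hf
  set e : M ≃ₗ[R] M₁ × M₂ := (LinearEquiv.ofBijective f h).symm with he_def
  have hef : ∀ x : M₁ × M₂, e (f x) = x := fun x =>
    (LinearEquiv.ofBijective f h).symm_apply_apply x
  have hw : ∀ y : M₂, e (w y) = (0, y) := by
    intro y
    have : w y = f (0, y) := by simp [hf]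
    rw [this, hef]
  set au : Module.End R M₁ := (LinearMap.fst R M₁ M₂).comp ((e : M →ₗ[R] M₁ × M₂).comp u)
  set av : Module.End R M₁ := (LinearMap.fst R M₁ M₂).comp ((e : M →ₗ[R] M₁ × M₂).comp v)
  have hsum : au + av = 1 := by
    ext x
    have h1 : u x + v x = f (x, 0) := by simp [hf]
    have : e (u x) + e (v x) = (x, 0) := by rw [← map_add, h1, hef]
    have := congrArg Prod.fst this
    simpa [au, av] using this
  rcases IsLocalRing.isUnit_or_isUnit_of_add_one hsum with hu | hv
  · exact Or.inl (stmt1_aux u w e hw hu)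
  · exact Or.inr (stmt1_aux v w e hw hv)
end

section
/- Let C be a k-linear category with length and x, y objects of C. If there exists a path of irreducible morphisms from x to y of length ℓ, then C(x,y) = RC(x,y) = ⋯ = R^ℓ C(x,y), and R^i C(x,y) = 0 for all i > ℓ. -/
open CategoryTheory

/-- Powers of the ideal `RC` of non-invertible morphisms of `C`. -/
def RPow (C : Type*) [Category C] [Preadditive C] : ℕ → (x y : C) → AddSubgroup (x ⟶ y)
  | 0, _, _ => ⊤
  | n + 1, x, y => AddSubgroup.closure
      { f | ∃ (z : C) (g : x ⟶ z) (h : z ⟶ y),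
          g ∈ RPow C n x z ∧ ¬ IsIso h ∧ f = g ≫ h }

/-- Irreducible morphism of `C` : lies in `RC` but not in `R²C`. -/
def IrredC {C : Type*} [Category C] [Preadditive C] {x y : C} (f : x ⟶ y) : Prop :=
  ¬ IsIso f ∧ f ∉ RPow C 2 x y

/-- `PathLen C n x y` : there is a path of `n` irreducible morphisms from `x` to `y`. -/
inductive PathLen (C : Type*) [Category C] [Preadditive C] : ℕ → C → C → Prop
  | nil (x : C) : PathLen C 0 x x
  | cons {n : ℕ} {x y z : C} : PathLen C n x y → ∀ g : y ⟶ z, IrredC g →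
      PathLen C (n + 1) x z

section Aux

variable {C : Type*} [Category C] [Preadditive C]

lemma RPow_succ (n : ℕ) (x y : C) :
    RPow C (n + 1) x y = AddSubgroup.closure
      { f | ∃ (z : C) (g : x ⟶ z) (h : z ⟶ y),
          g ∈ RPow C n x z ∧ ¬ IsIso h ∧ f = g ≫ h } := rfl

lemma RPow_zero (x y : C) : RPow C 0 x y = ⊤ := rfl

/-- Postcomposition as an additive hom. -/
def postHom (x : C) {y z : C} (u : y ⟶ z) : (x ⟶ y) →+ (x ⟶ z) :=
  AddMonoidHom.mk' (fun f => f ≫ u) (fun a b => by simp [Preadditive.add_comp])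

/-- Precomposition as an additive hom. -/
def preHom {x y : C} (g : x ⟶ y) (z : C) : (y ⟶ z) →+ (x ⟶ z) :=
  AddMonoidHom.mk' (fun f => g ≫ f) (fun a b => by simp [Preadditive.comp_add])

lemma RPow_succ_le (n : ℕ) : ∀ x y : C, RPow C (n + 1) x y ≤ RPow C n x y := by
  induction n with
  | zero => intro x y; exact le_top
  | succ n ih =>
    intro x y
    rw [RPow_succ, RPow_succ]
    apply AddSubgroup.closure_mono
    rintro f ⟨z, g, h, hg, hh, rfl⟩
    exact ⟨z, g, h, ih x z hg, hh, rfl⟩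

lemma RPow_le {m n : ℕ} (hmn : m ≤ n) (x y : C) : RPow C n x y ≤ RPow C m x y := by
  induction n, hmn using Nat.le_induction with
  | base => exact le_rfl
  | succ n hmn ih => exact (RPow_succ_le n x y).trans ih

lemma mem_RPow_one {x y : C} {f : x ⟶ y} (hf : ¬ IsIso f) : f ∈ RPow C 1 x y := by
  rw [show (1 : ℕ) = 0 + 1 from rfl, RPow_succ]
  exact AddSubgroup.subset_closure ⟨x, 𝟙 x, f, AddSubgroup.mem_top _, hf,
    (Category.id_comp f).symm⟩

variable (hsep : ∀ (x y : C) (f : x ⟶ y), (∀ n, f ∈ RPow C n x y) → f = 0)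

include hsep in
/-- If `h` is not iso but `h ≫ u` is iso, then `h = 0`. -/
lemma eq_zero_of_comp_iso {w y z : C} {h : w ⟶ y} {u : y ⟶ z}
    (hh : ¬ IsIso h) (hiso : IsIso (h ≫ u)) : h = 0 := by
  set s : y ⟶ w := u ≫ inv (h ≫ u) with hs_def
  have hs : h ≫ s = 𝟙 w := by
    rw [hs_def, ← Category.assoc, IsIso.hom_inv_id]
  set e : y ⟶ y := s ≫ h with he_def
  have he_idem : e ≫ e = e := by
    rw [he_def, Category.assoc, ← Category.assoc h s h, hs, Category.id_comp]
  have he : ¬ IsIso e := by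
    intro hi
    have he1 : e = 𝟙 y := by
      have h2 := congrArg (fun t => inv e ≫ t) he_idem
      simpa using h2
    exact hh ⟨s, hs, by rw [← he_def, he1]⟩
  have hhe : h ≫ e = h := by
    rw [he_def, ← Category.assoc, hs, Category.id_comp]
  have key : ∀ m, h ∈ RPow C m w y := by
    intro m
    induction m with
    | zero => exact AddSubgroup.mem_top _
    | succ m ih =>
      rw [RPow_succ]
      exact AddSubgroup.subset_closure ⟨y, h, e, ih, he, hhe.symm⟩
  exact hsep _ _ _ key

include hsep in
lemma RPow_comp_right : ∀ (n : ℕ) (x y z : C) (f : x ⟶ y) (u : y ⟶ z),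
    f ∈ RPow C n x y → f ≫ u ∈ RPow C n x z := by
  intro n
  induction n with
  | zero => intro x y z f u _; exact AddSubgroup.mem_top _
  | succ n ih =>
    intro x y z f u hf
    have hle : RPow C (n + 1) x y ≤
        AddSubgroup.comap (postHom x u) (RPow C (n + 1) x z) := by
      rw [RPow_succ]
      apply (AddSubgroup.closure_le _).mpr
      rintro f' ⟨w, g, h, hg, hh, rfl⟩
      show (g ≫ h) ≫ u ∈ RPow C (n + 1) x z
      by_cases hiso : IsIso (h ≫ u)
      · have h0 : h = 0 := eq_zero_of_comp_iso hsep hh hiso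
        rw [h0]
        simp only [Limits.comp_zero, Limits.zero_comp]
        exact zero_mem _
      · rw [Category.assoc]
        rw [RPow_succ]
        exact AddSubgroup.subset_closure ⟨w, g, h ≫ u, hg, hiso, rfl⟩
    exact hle hf

include hsep in
lemma RPow_comp : ∀ (m n : ℕ) (x y z : C) (g : x ⟶ y) (h : y ⟶ z),
    g ∈ RPow C n x y → h ∈ RPow C m y z → g ≫ h ∈ RPow C (n + m) x z := by
  intro m
  induction m with
  | zero => intro n x y z g h hg _; exact RPow_comp_right hsep n x y z g h hg
  | succ m ih =>
    intro n x y z g h hg hh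
    have hle : RPow C (m + 1) y z ≤
        AddSubgroup.comap (preHom g z) (RPow C (n + (m + 1)) x z) := by
      rw [RPow_succ]
      apply (AddSubgroup.closure_le _).mpr
      rintro f' ⟨w, g', h', hg', hh', rfl⟩
      have hmem : (g ≫ g') ≫ h' ∈ RPow C (n + m + 1) x z := by
        rw [RPow_succ]
        exact AddSubgroup.subset_closure ⟨w, g ≫ g', h', ih n x y w g g' hg hg', hh', rfl⟩
      show g ≫ (g' ≫ h') ∈ RPow C (n + (m + 1)) x z
      rw [← Category.assoc]
      exact hmem
    exact hle hh

variable (hdist : ∀ x y : C, Nonempty (x ≅ y) → x = y)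

include hsep hdist in
/-- Key lemma: a morphism of depth exactly `n` yields a path of length `n`. -/
lemma path_of_depth : ∀ (n : ℕ) (x y : C) (f : x ⟶ y),
    f ∈ RPow C n x y → f ∉ RPow C (n + 1) x y → PathLen C n x y := by
  intro n
  induction n with
  | zero =>
    intro x y f _ hf1
    by_cases hxy : x = y
    · subst hxy; exact PathLen.nil x
    · exfalso
      have hni : ¬ IsIso f := fun hi => hxy (hdist x y ⟨asIso f⟩)
      exact hf1 (mem_RPow_one hni)
  | succ n ih =>
    intro x y f hf1 hf2
    rw [RPow_succ] at hf1
    have hex : ∃ t ∈ { f | ∃ (z : C) (g : x ⟶ z) (h : z ⟶ y),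
        g ∈ RPow C n x z ∧ ¬ IsIso h ∧ f = g ≫ h }, t ∉ RPow C (n + 2) x y := by
      by_contra hall
      push_neg at hall
      exact hf2 ((AddSubgroup.closure_le _).mpr hall hf1)
    obtain ⟨t, ⟨z, g, h, hg, hh, rfl⟩, ht⟩ := hex
    have hh2 : h ∉ RPow C 2 z y := by
      intro hmem
      exact ht (RPow_comp hsep 2 n x z y g h hg hmem)
    have hgn : g ∉ RPow C (n + 1) x z := by
      intro hmem
      exact ht (RPow_comp hsep 1 (n + 1) x z y g h hmem (mem_RPow_one hh))
    exact PathLen.cons (ih x z g hg hgn) h ⟨hh, hh2⟩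

end Aux

theorem stmt8 {k : Type*} [Field k] {C : Type*} [Category C] [Preadditive C]
    [CategoryTheory.Linear k C]
    (hfin : ∀ x y : C, FiniteDimensional k (x ⟶ y))
    (hdist : ∀ x y : C, Nonempty (x ≅ y) → x = y)
    (hconst : ∀ (x y : C) (m n : ℕ), PathLen C m x y → PathLen C n x y → m = n)
    (hsep : ∀ (x y : C) (f : x ⟶ y), (∀ n, f ∈ RPow C n x y) → f = 0)
    (x y : C) (ℓ : ℕ) (hpath : PathLen C ℓ x y) :
    (∀ m ≤ ℓ, RPow C m x y = ⊤) ∧ (∀ i, ℓ < i → RPow C i x y = ⊥) := by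
  classical
  -- every nonzero morphism lies in `RPow ℓ` but not in `RPow (ℓ+1)`
  have depth : ∀ f : x ⟶ y, f ≠ 0 →
      f ∈ RPow C ℓ x y ∧ f ∉ RPow C (ℓ + 1) x y := by
    intro f hf0
    have hne : ∃ n, f ∉ RPow C n x y := by
      by_contra hall
      push_neg at hall
      exact hf0 (hsep x y f hall)
    have hNspec : f ∉ RPow C (Nat.find hne) x y := Nat.find_spec hne
    have hNpos : Nat.find hne ≠ 0 := by
      intro h0
      rw [h0, RPow_zero] at hNspec
      exact hNspec (AddSubgroup.mem_top _)
    obtain ⟨d, hd⟩ : ∃ d, Nat.find hne = d + 1 :=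
      ⟨Nat.find hne - 1, (Nat.succ_pred_eq_of_pos (Nat.pos_of_ne_zero hNpos)).symm⟩
    have hmem : f ∈ RPow C d x y := by
      by_contra hc
      have hle : Nat.find hne ≤ d := Nat.find_le hc
      omega
    have hnmem : f ∉ RPow C (d + 1) x y := hd ▸ hNspec
    have hp : PathLen C d x y := path_of_depth hsep hdist d x y f hmem hnmem
    have hdl : d = ℓ := hconst x y d ℓ hp hpath
    subst hdl
    exact ⟨hmem, hnmem⟩
  constructor
  · intro m hm
    rw [eq_top_iff]
    intro f _
    by_cases hf0 : f = 0
    · rw [hf0]; exact zero_mem _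
    · exact RPow_le hm x y (depth f hf0).1
  · intro i hi
    rw [eq_bot_iff]
    intro f hf
    rw [AddSubgroup.mem_bot]
    by_contra hf0
    exact (depth f hf0).2 (RPow_le (by omega : ℓ + 1 ≤ i) x y hf)
end

section
/- Let f₁, …, fₙ be a path of irreducible morphisms X₀ → X₁ → ⋯ → Xₙ between indecomposable modules over a finite-dimensional algebra over a perfect field, and for each t let f′ₜ be the homogeneous modification of fₜ (with fₜ − f′ₜ ∈ rad²). Suppose there exists t ∈ {1,…,n} with d_ℓ(fₜ) ≤ t−1 and a morphism h ∈ rad^{t−1−d_ℓ(fₜ)}(X₀, Ker(f′ₜ)) \ rad^{t−d_ℓ(fₜ)} such that f₁⋯f_{t−1} − h∘i ∈ rad^t, where i : Ker(f′ₜ) → X_{t−1} is the inclusion. Then f₁⋯fₙ ∈ rad^{n+1}. -/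
/-!
Over an artinian ring, Fitting's lemma makes every endomorphism of an indecomposable module of
finite length a unit or nilpotent, so a morphism out of such a module that is not a split
monomorphism lies in the radical; hence every irreducible `fₘ` is radical and `f₁⋯fₘ ∈ rad^m`.
Since `i f′ₜ = 0`,
  `f₁⋯fₜ = (f₁⋯fₜ₋₁ − h i) fₜ + (h i)(fₜ − f′ₜ) ∈ rad^t · rad + rad^{t−1} · rad² ⊆ rad^{t+1}`,
and composing with the radical maps `fₜ₊₁, …, fₙ` gives `f₁⋯fₙ ∈ rad^{n+1}`.
-/

open CategoryTheory

/-- A morphism lies in the radical of `mod A`. -/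
def InRad {A : Type*} [Ring A] {M N : ModuleCat A} (f : M ⟶ N) : Prop :=
  ∀ g : N ⟶ M, IsIso (𝟙 M - f ≫ g)

/-- Powers of the radical of the category of `A`-modules. -/
def RadPow (A : Type*) [Ring A] : ℕ → (M N : ModuleCat A) → AddSubgroup (M ⟶ N)
  | 0, _, _ => ⊤
  | n + 1, M, N => AddSubgroup.closure
      { f | ∃ (Z : ModuleCat A) (g : M ⟶ Z) (h : Z ⟶ N),
          g ∈ RadPow A n M Z ∧ InRad h ∧ f = g ≫ h }

/-- An `A`-module is indecomposable. -/
def Indecomp (A : Type*) [Ring A] (M : ModuleCat A) : Prop :=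
  (⊥ : Submodule A M) ≠ ⊤ ∧ ∀ p q : Submodule A M, IsCompl p q → p = ⊥ ∨ q = ⊥

def IsSec {A : Type*} [Ring A] {M N : ModuleCat A} (f : M ⟶ N) : Prop :=
  ∃ g : N ⟶ M, f ≫ g = 𝟙 M

def IsRetr {A : Type*} [Ring A] {M N : ModuleCat A} (f : M ⟶ N) : Prop :=
  ∃ g : N ⟶ M, g ≫ f = 𝟙 N

/-- Irreducible morphism. -/
def IrredHom {A : Type*} [Ring A] {M N : ModuleCat A} (f : M ⟶ N) : Prop :=
  ¬ IsSec f ∧ ¬ IsRetr f ∧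
    ∀ (Z : ModuleCat A) (u : M ⟶ Z) (v : Z ⟶ N), f = u ≫ v → IsSec u ∨ IsRetr v

/-- Witness that the left degree of the irreducible morphism `f` is at most `m` :
some `g : Z → M` from an indecomposable with `g ∈ rad^m \ rad^{m+1}` and
`g ≫ f ∈ rad^{m+2}`. -/
def LeftDegWitness {A : Type*} [Ring A] {M N : ModuleCat A} (f : M ⟶ N) (m : ℕ) : Prop :=
  ∃ (Z : ModuleCat A) (g : Z ⟶ M), Indecomp A Z ∧ g ∈ RadPow A m Z M ∧
    g ∉ RadPow A (m + 1) Z M ∧ g ≫ f ∈ RadPow A (m + 2) Z N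

/-- The left degree of the irreducible morphism `f` is finite. -/
def FiniteLeftDegree {A : Type*} [Ring A] {M N : ModuleCat A} (f : M ⟶ N) : Prop :=
  ∃ m, LeftDegWitness f m

/-- The left degree of the irreducible morphism `f` equals `n`. -/
def LeftDegreeIs {A : Type*} [Ring A] {M N : ModuleCat A} (f : M ⟶ N) (n : ℕ) : Prop :=
  LeftDegWitness f n ∧ ∀ m < n, ¬ LeftDegWitness f m

/-- Witness that the right degree of the irreducible morphism `f` is at most `m`. -/
def RightDegWitness {A : Type*} [Ring A] {M N : ModuleCat A} (f : M ⟶ N) (m : ℕ) : Prop :=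
  ∃ (Z : ModuleCat A) (g : N ⟶ Z), Indecomp A Z ∧ g ∈ RadPow A m N Z ∧
    g ∉ RadPow A (m + 1) N Z ∧ f ≫ g ∈ RadPow A (m + 2) M Z

/-- The right degree of the irreducible morphism `f` is finite. -/
def FiniteRightDegree {A : Type*} [Ring A] {M N : ModuleCat A} (f : M ⟶ N) : Prop :=
  ∃ m, RightDegWitness f m

/-- Composition `f₁ ⋯ f_m : X 0 ⟶ X m` of a chain of morphisms. -/
def chainComp {A : Type*} [Ring A] (X : ℕ → ModuleCat A)
    (f : ∀ m, X m ⟶ X (m + 1)) : ∀ m, X 0 ⟶ X m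
  | 0 => 𝟙 (X 0)
  | m + 1 => chainComp X f m ≫ f m

theorem Module.End.isUnit_or_isNilpotent_of_indecomposable {R M : Type*} [Ring R] [AddCommGroup M]
    [Module R M] [IsArtinian R M] [IsNoetherian R M]
    (hM : ∀ p q : Submodule R M, IsCompl p q → p = ⊥ ∨ q = ⊥) (φ : Module.End R M) :
    IsUnit φ ∨ IsNilpotent φ := by
  obtain ⟨n, hcompl, hn⟩ :=
    ((LinearMap.eventually_isCompl_ker_pow_range_pow φ).and (Filter.eventually_ne_atTop 0)).exists
  rcases hM _ _ hcompl with hker | hrange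
  · have hsurj : LinearMap.range (φ ^ n) = ⊤ := by simpa [hker] using hcompl.sup_eq_top
    refine .inl ((isUnit_pow_iff hn).mp ((Module.End.isUnit_iff _).mpr ?_))
    exact ⟨LinearMap.ker_eq_bot.mp hker, LinearMap.range_eq_top.mp hsurj⟩
  · exact .inr ⟨n, LinearMap.range_eq_bot.mp hrange⟩

section Radical

variable {A : Type*} [Ring A]

theorem ModuleCat.isIso_iff_isUnit_hom {M : ModuleCat A} (u : M ⟶ M) : IsIso u ↔ IsUnit u.hom :=
  (isUnit_iff_isIso (X := M) u).symm.trans (MulEquiv.isUnit_map (ModuleCat.endRingEquiv M)).symm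

theorem inRad_of_not_isSec [IsArtinianRing A] {M N : ModuleCat A} [Module.Finite A M]
    (hM : Indecomp A M) {f : M ⟶ N} (hf : ¬ IsSec f) : InRad f := by
  intro g
  rcases Module.End.isUnit_or_isNilpotent_of_indecomposable hM.2 (f ≫ g).hom with hunit | hnil
  · have : IsIso (f ≫ g) := (ModuleCat.isIso_iff_isUnit_hom _).mpr hunit
    exact absurd ⟨g ≫ inv (f ≫ g), by rw [← Category.assoc, IsIso.hom_inv_id]⟩ hf
  · rw [ModuleCat.isIso_iff_isUnit_hom, ModuleCat.hom_sub, ModuleCat.hom_id,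
      ← Module.End.one_eq_id]
    exact hnil.isUnit_one_sub

theorem InRad.comp_right {M N P : ModuleCat A} {f : M ⟶ N} (hf : InRad f) (g : N ⟶ P) :
    InRad (f ≫ g) := fun u => by simpa only [Category.assoc] using hf (g ≫ u)

theorem mem_radPow_zero {M N : ModuleCat A} (f : M ⟶ N) : f ∈ RadPow A 0 M N :=
  AddSubgroup.mem_top f

theorem InRad.mem_radPow_one {M N : ModuleCat A} {f : M ⟶ N} (hf : InRad f) :
    f ∈ RadPow A 1 M N :=
  AddSubgroup.subset_closure ⟨M, 𝟙 M, f, mem_radPow_zero _, hf, (Category.id_comp f).symm⟩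

theorem comp_mem_radPow_of_mem_left {m : ℕ} {M N P : ModuleCat A} {f : M ⟶ N}
    (hf : f ∈ RadPow A m M N) (g : N ⟶ P) : f ≫ g ∈ RadPow A m M P := by
  cases m with
  | zero => exact mem_radPow_zero _
  | succ m =>
    refine (AddSubgroup.closure_le (K := (RadPow A (m + 1) M P).comap
      (Preadditive.rightComp M g))).2 ?_ hf
    rintro _ ⟨Z, u, v, hu, hv, rfl⟩
    exact AddSubgroup.subset_closure ⟨Z, u, v ≫ g, hu, hv.comp_right g, Category.assoc u v g⟩

theorem comp_mem_radPow_add (p : ℕ) {m : ℕ} {M N P : ModuleCat A} {f : M ⟶ N}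
    (hf : f ∈ RadPow A m M N) {g : N ⟶ P} (hg : g ∈ RadPow A p N P) :
    f ≫ g ∈ RadPow A (m + p) M P := by
  induction p generalizing P with
  | zero => exact comp_mem_radPow_of_mem_left hf g
  | succ p ih =>
    refine (AddSubgroup.closure_le (K := (RadPow A (m + p + 1) M P).comap
      (Preadditive.leftComp P f))).2 ?_ hg
    rintro _ ⟨Z, u, v, hu, hv, rfl⟩
    exact AddSubgroup.subset_closure ⟨Z, f ≫ u, v, ih hu, hv, Category.assoc f u v⟩

theorem radPow_succ_le (m : ℕ) {M N : ModuleCat A} : RadPow A (m + 1) M N ≤ RadPow A m M N := by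
  induction m generalizing N with
  | zero => exact le_top
  | succ m ih =>
    refine AddSubgroup.closure_le _ |>.2 ?_
    rintro _ ⟨Z, u, v, hu, hv, rfl⟩
    exact AddSubgroup.subset_closure ⟨Z, u, v, ih hu, hv, rfl⟩

theorem radPow_antitone (M N : ModuleCat A) : Antitone fun m => RadPow A m M N :=
  antitone_nat_of_succ_le fun m => radPow_succ_le m

theorem chainComp_mem_radPow_add {X : ℕ → ModuleCat A} {f : ∀ m, X m ⟶ X (m + 1)} {m n e : ℕ}
    (hmn : m ≤ n) (hf : ∀ j < n, InRad (f j))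
    (hm : chainComp X f m ∈ RadPow A (m + e) (X 0) (X m)) :
    chainComp X f n ∈ RadPow A (n + e) (X 0) (X n) := by
  induction n, hmn using Nat.le_induction with
  | base => exact hm
  | succ n _ ih =>
    rw [Nat.add_right_comm]
    exact comp_mem_radPow_add 1 (ih fun j hj => hf j (by omega)) (hf n (by omega)).mem_radPow_one

theorem comp_mem_radPow_add_two_of_approx {s : ℕ} {M K Y Z : ModuleCat A} {c : M ⟶ Y}
    {h : M ⟶ K} {i : K ⟶ Y} {g g' : Y ⟶ Z} (hc : c ∈ RadPow A s M Y)
    (hch : c - h ≫ i ∈ RadPow A (s + 1) M Y) (hg : InRad g) (hgg' : g - g' ∈ RadPow A 2 Y Z)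
    (hig' : i ≫ g' = 0) : c ≫ g ∈ RadPow A (s + 2) M Z := by
  have hhi : h ≫ i ∈ RadPow A s M Y := by
    simpa using sub_mem hc (radPow_antitone M Y (Nat.le_succ s) hch)
  have hsplit : c ≫ g = (c - h ≫ i) ≫ g + (h ≫ i) ≫ (g - g') := by
    simp [Preadditive.sub_comp, Preadditive.comp_sub, hig']
  rw [hsplit]
  exact add_mem (comp_mem_radPow_add 1 hch hg.mem_radPow_one) (comp_mem_radPow_add 2 hhi hgg')

end Radical

theorem stmt17_general {k : Type*} [Field k]
    {A : Type*} [Ring A] [Algebra k A] [FiniteDimensional k A]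
    (n t : ℕ) (ht1 : 1 ≤ t) (htn : t ≤ n)
    (X : ℕ → ModuleCat A) (f : ∀ m, X m ⟶ X (m + 1))
    (hmod : ∀ m ≤ n, Module.Finite A (X m))
    (hind : ∀ m ≤ n, Indecomp A (X m))
    (hirr : ∀ m < n, IrredHom (f m))
    (f' : X (t - 1) ⟶ X (t - 1 + 1))
    (hf' : f (t - 1) - f' ∈ RadPow A 2 (X (t - 1)) (X (t - 1 + 1)))
    (i : ModuleCat.of A (LinearMap.ker f'.hom) ⟶ X (t - 1))
    (hi : i = ModuleCat.ofHom (LinearMap.ker f'.hom).subtype)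
    (h : X 0 ⟶ ModuleCat.of A (LinearMap.ker f'.hom))
    (hcomp : chainComp X f (t - 1) - h ≫ i ∈ RadPow A t (X 0) (X (t - 1))) :
    chainComp X f n ∈ RadPow A (n + 1) (X 0) (X n) := by
  have : IsArtinianRing A := IsArtinianRing.of_finite k A
  have hrad : ∀ m < n, InRad (f m) := fun m hm =>
    have := hmod m hm.le
    inRad_of_not_isSec (hind m hm.le) (hirr m hm).1
  have hif' : i ≫ f' = 0 := hi ▸ ModuleCat.hom_ext (LinearMap.comp_ker_subtype f'.hom)
  have hbefore : chainComp X f (t - 1) ∈ RadPow A (t - 1) (X 0) (X (t - 1)) :=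
    chainComp_mem_radPow_add (m := 0) (n := t - 1) (e := 0) (Nat.zero_le _)
      (fun j _ => hrad j (by omega)) (mem_radPow_zero _)
  have hat : chainComp X f (t - 1 + 1) ∈ RadPow A (t - 1 + 1 + 1) (X 0) (X (t - 1 + 1)) :=
    comp_mem_radPow_add_two_of_approx hbefore (radPow_antitone _ _ (by omega) hcomp)
      (hrad _ (by omega)) hf' hif'
  exact chainComp_mem_radPow_add (by omega) hrad hat

/-- Let `f₁, …, fₙ` be a path of irreducible morphisms between
indecomposable modules and `f′ₜ` a modification of `fₜ` with `fₜ − f′ₜ ∈ rad²`.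
If `d_ℓ(fₜ) ≤ t−1` and some `h ∈ rad^{t−1−d}(X₀, Ker f′ₜ) \ rad^{t−d}` satisfies
`f₁⋯f_{t−1} − h∘i ∈ rad^t` (`i` the kernel inclusion), then `f₁⋯fₙ ∈ rad^{n+1}`. -/
theorem stmt17 {k : Type*} [Field k] [PerfectField k]
    {A : Type*} [Ring A] [Algebra k A] [FiniteDimensional k A]
    (n t d : ℕ) (ht1 : 1 ≤ t) (htn : t ≤ n)
    (X : ℕ → ModuleCat A) (f : ∀ m, X m ⟶ X (m + 1))
    (hmod : ∀ m ≤ n, Module.Finite A (X m))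
    (hind : ∀ m ≤ n, Indecomp A (X m))
    (hirr : ∀ m < n, IrredHom (f m))
    (hd : LeftDegreeIs (f (t - 1)) d) (hdt : d ≤ t - 1)
    (f' : X (t - 1) ⟶ X (t - 1 + 1))
    (hf' : f (t - 1) - f' ∈ RadPow A 2 (X (t - 1)) (X (t - 1 + 1)))
    (i : ModuleCat.of A (LinearMap.ker f'.hom) ⟶ X (t - 1))
    (hi : i = ModuleCat.ofHom (LinearMap.ker f'.hom).subtype)
    (h : X 0 ⟶ ModuleCat.of A (LinearMap.ker f'.hom))
    (hh : h ∈ RadPow A (t - 1 - d) (X 0) (ModuleCat.of A (LinearMap.ker f'.hom)))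
    (hh' : h ∉ RadPow A (t - d) (X 0) (ModuleCat.of A (LinearMap.ker f'.hom)))
    (hcomp : chainComp X f (t - 1) - h ≫ i ∈ RadPow A t (X 0) (X (t - 1))) :
    chainComp X f n ∈ RadPow A (n + 1) (X 0) (X n) :=
  stmt17_general (k := k) n t ht1 htn X f hmod hind hirr f' hf' i hi h hcomp
end
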